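/- Uniqueness up to an additive constant in the semi-discrete worst transportation problem: let Ω ⊆ ℝ^d be a compact convex set with nonempty interior, f : Ω → ℝ a positive continuous function, μ the measure with density f on Ω, p₁, …, pₙ ∈ ℝ^d pairwise distinct points, and ν₁, …, νₙ > 0 with Σᵢ νᵢ = μ(Ω). If h, h' ∈ ℝⁿ both satisfy μ(Wᵢ(h) ∩ Ω) = νᵢ and μ(Wᵢ(h') ∩ Ω) = νᵢ for all i (Wᵢ being the farthest power cells), then there exists a constant c ∈ ℝ with h'ᵢ = hᵢ + c for all i. -/

import Mathlib

open MeasureTheory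
open scoped RealInnerProductSpace

/-- The farthest power cell of index `i` for points `p` and heights `h`. -/
def farCell {d n : ℕ} (p : Fin n → EuclideanSpace ℝ (Fin d)) (h : Fin n → ℝ) (i : Fin n) :
    Set (EuclideanSpace ℝ (Fin d)) :=
  {x | ∀ j, ⟪p i, x⟫ + h i ≤ ⟪p j, x⟫ + h j}

/-- The measure with density `f` on `Ω` (with respect to Lebesgue measure). -/
noncomputable def densMeasure {d : ℕ} (Ω : Set (EuclideanSpace ℝ (Fin d)))
    (f : EuclideanSpace ℝ (Fin d) → ℝ) : Measure (EuclideanSpace ℝ (Fin d)) :=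
  (volume.restrict Ω).withDensity fun x => ENNReal.ofReal (f x)

/-!
Replacing `h'` by `g = h' - c` with `c = maxᵢ (h'ᵢ - hᵢ)` leaves the cells unchanged and gives
`g ≤ h`, with equality exactly on a nonempty set `S`. For `i ∈ S` the cell `Wᵢ(g)` lies inside
`Wᵢ(h)` and has the same mass, so `Wᵢ(h) \ Wᵢ(g)` is `μ`-null. If `S` were not everything, compare
the lower envelope `φ` of the affine functions indexed by `S` with the envelopes `ψ_g < ψ_h`
indexed by its complement. At a generic point of a `g`-cell in `S` we have `φ < ψ_g`, at a generic
point of an `h`-cell outside `S` we have `ψ_h < φ`, so by connectedness of `int Ω` the open set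
`{ψ_g < φ < ψ_h} ∩ int Ω` is nonempty. It has positive mass because `f > 0`, yet it lies in
`⋃_{i ∈ S} Wᵢ(h) \ Wᵢ(g)`.
-/

theorem MeasureTheory.Measure.addHaar_setOf_inner_eq {E : Type*} [NormedAddCommGroup E]
    [InnerProductSpace ℝ E] [FiniteDimensional ℝ E] [MeasurableSpace E] [BorelSpace E]
    (μ : Measure E) [μ.IsAddHaarMeasure] {v : E} (hv : v ≠ 0) (r : ℝ) : μ {x | ⟪v, x⟫ = r} = 0 := by
  have hsurj : Function.Surjective (innerₛₗ ℝ v) := fun t =>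
    ⟨(t / ⟪v, v⟫) • v, by simp [hv]⟩
  have := (ae_comp_linearMap_mem_iff (innerₛₗ ℝ v) μ volume hsurj
    (measurableSet_singleton r).compl).2 (compl_mem_ae_iff.2 (measure_singleton r))
  simpa [ae_iff] using this

theorem IsPreconnected.exists_lt_lt {X : Type*} [TopologicalSpace X] {C : Set X}
    (hC : IsPreconnected C) {u v w : X → ℝ} (hu : ContinuousOn u C) (hv : ContinuousOn v C)
    (hw : ContinuousOn w C) (hvw : ∀ x ∈ C, v x < w x) {a b : X} (ha : a ∈ C) (hb : b ∈ C)
    (hua : u a < v a) (hub : w b < u b) : ∃ x ∈ C, v x < u x ∧ u x < w x := by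
  obtain ⟨x, hx, hux⟩ := hC.intermediate_value₂ ha hb (hu.add hu) (hv.add hw)
    (by have := hvw a ha; simp only [Pi.add_apply]; linarith)
    (by have := hvw b hb; simp only [Pi.add_apply]; linarith)
  have := hvw x hx
  simp only [Pi.add_apply] at hux
  exact ⟨x, hx, by linarith, by linarith⟩

section densMeasure

variable {d : ℕ} {Ω : Set (EuclideanSpace ℝ (Fin d))} {f : EuclideanSpace ℝ (Fin d) → ℝ}

theorem densMeasure_absolutelyContinuous : densMeasure Ω f ≪ volume :=
  (withDensity_absolutelyContinuous _ _).trans Measure.restrict_le_self.absolutelyContinuous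

theorem densMeasure_pos_of_isOpen (hΩ : NullMeasurableSet Ω) (hf : ContinuousOn f Ω)
    (hfpos : ∀ x ∈ Ω, 0 < f x) {U : Set (EuclideanSpace ℝ (Fin d))} (hU : IsOpen U)
    (hUne : U.Nonempty) (hUΩ : U ⊆ Ω) : 0 < densMeasure Ω f U := by
  have hfm : AEMeasurable (fun x => ENNReal.ofReal (f x)) (volume.restrict Ω) :=
    ENNReal.measurable_ofReal.comp_aemeasurable (hf.aemeasurable₀ hΩ)
  have hsupp : {x | ENNReal.ofReal (f x) ≠ 0} ∩ U = U :=
    Set.inter_eq_right.2 fun x hx => by simpa using hfpos x (hUΩ hx)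
  rw [pos_iff_ne_zero, densMeasure, Ne, withDensity_apply_eq_zero' hfm, hsupp,
    Measure.restrict_apply hU.measurableSet, Set.inter_eq_left.2 hUΩ]
  exact (hU.measure_pos volume hUne).ne'

end densMeasure

section farCell

variable {d n : ℕ} (p : Fin n → EuclideanSpace ℝ (Fin d))

theorem farCell_sub_const (h : Fin n → ℝ) (c : ℝ) :
    farCell p (fun i => h i - c) = farCell p h := by
  ext i x
  simp only [farCell, Set.mem_ofPred_eq, sub_eq_add_neg, ← add_assoc, add_le_add_iff_right]

theorem isClosed_farCell (h : Fin n → ℝ) (i : Fin n) : IsClosed (farCell p h i) := by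
  simp only [farCell, Set.ofPred_forall]
  exact isClosed_iInter fun j => isClosed_le (by fun_prop) (by fun_prop)

theorem farCell_subset_farCell {g h : Fin n → ℝ} {i : Fin n}
    (hgh : ∀ j, h i - g i ≤ h j - g j) : farCell p g i ⊆ farCell p h i := by
  intro x hx j
  linarith [hx j, hgh j]

noncomputable def minPower (h : Fin n → ℝ) {s : Finset (Fin n)} (hs : s.Nonempty)
    (x : EuclideanSpace ℝ (Fin d)) : ℝ :=
  s.inf' hs fun k => ⟪p k, x⟫ + h k

variable {p} {h : Fin n → ℝ} {s : Finset (Fin n)} (hs : s.Nonempty)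

theorem continuous_minPower : Continuous (minPower p h hs) :=
  Continuous.finset_inf'_apply hs fun _ _ => by fun_prop

theorem minPower_le {k : Fin n} (hk : k ∈ s) (x : EuclideanSpace ℝ (Fin d)) :
    minPower p h hs x ≤ ⟪p k, x⟫ + h k :=
  Finset.inf'_le _ hk

theorem exists_minPower_eq (x : EuclideanSpace ℝ (Fin d)) :
    ∃ k ∈ s, minPower p h hs x = ⟪p k, x⟫ + h k :=
  Finset.exists_mem_eq_inf' hs _

theorem minPower_congr {g : Fin n → ℝ} (hgh : ∀ k ∈ s, g k = h k) :
    minPower p g hs = minPower p h hs := by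
  ext x
  exact Finset.inf'_congr hs rfl fun k hk => by rw [hgh k hk]

theorem minPower_lt_minPower {g : Fin n → ℝ} (hgh : ∀ k ∈ s, g k < h k)
    (x : EuclideanSpace ℝ (Fin d)) : minPower p g hs x < minPower p h hs x := by
  obtain ⟨k, hk, hkx⟩ := exists_minPower_eq hs x (h := h) (p := p)
  rw [hkx]
  exact (minPower_le hs hk x).trans_lt (by linarith [hgh k hk])

variable {Ω : Set (EuclideanSpace ℝ (Fin d))} {f : EuclideanSpace ℝ (Fin d) → ℝ}

theorem exists_mem_interior_forall_lt_of_farCell (hΩ : Convex ℝ Ω) (hp : Function.Injective p)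
    {i : Fin n} (hpos : densMeasure Ω f (farCell p h i ∩ Ω) ≠ 0) :
    ∃ a ∈ interior Ω, ∀ k ≠ i, ⟪p i, a⟫ + h i < ⟪p k, a⟫ + h k := by
  set N := frontier Ω ∪ ⋃ k, ⋃ (_ : k ≠ i), {x | ⟪p k - p i, x⟫ = h i - h k}
  have hN : densMeasure Ω f N = 0 := densMeasure_absolutelyContinuous <|
    measure_union_null (hΩ.addHaar_frontier volume) <| measure_iUnion_null fun k =>
      measure_iUnion_null fun hk => Measure.addHaar_setOf_inner_eq volume
        (sub_ne_zero.2 fun hki => hk (hp hki)) _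
  obtain ⟨a, ⟨ha, haΩ⟩, haN⟩ := nonempty_of_measure_ne_zero (μ := densMeasure Ω f)
    (s := (farCell p h i ∩ Ω) \ N) (by rwa [measure_sdiff_null hN])
  refine ⟨a, ?_, fun k hk => (ha k).lt_of_ne fun hak => haN (Or.inr ?_)⟩
  · by_contra haint
    exact haN (Or.inl ⟨subset_closure haΩ, haint⟩)
  · simp only [Set.mem_iUnion, Set.mem_ofPred_eq, inner_sub_left]
    exact ⟨k, hk, by linarith⟩

theorem measure_farCell_diff_eq_zero {g : Fin n → ℝ} {i : Fin n} (hΩ : Convex ℝ Ω)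
    (hgh : ∀ j, h i - g i ≤ h j - g j)
    (hmass : densMeasure Ω f (farCell p g i ∩ Ω) = densMeasure Ω f (farCell p h i ∩ Ω))
    (hfin : densMeasure Ω f (farCell p h i ∩ Ω) ≠ ⊤) :
    densMeasure Ω f ((farCell p h i ∩ Ω) \ farCell p g i) = 0 := by
  have hsub : farCell p g i ∩ Ω ⊆ farCell p h i ∩ Ω :=
    Set.inter_subset_inter_left _ (farCell_subset_farCell p hgh)
  have hnull : NullMeasurableSet (farCell p g i ∩ Ω) (densMeasure Ω f) :=
    ((isClosed_farCell p g i).measurableSet.nullMeasurableSet.inter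
      (hΩ.nullMeasurableSet volume)).mono_ac densMeasure_absolutelyContinuous
  have := ae_eq_set.1 (ae_eq_of_subset_of_measure_ge hsub hmass.ge hnull hfin)
  refine measure_mono_null ?_ this.2
  rintro x ⟨hxh, hxg⟩
  exact ⟨hxh, fun hx => hxg hx.1⟩

theorem exists_mem_farCell_diff_of_minPower_lt {g : Fin n → ℝ} {S : Finset (Fin n)}
    (hS : S.Nonempty) (hT : Sᶜ.Nonempty) (hgS : ∀ k ∈ S, g k = h k)
    {x : EuclideanSpace ℝ (Fin d)} (hgx : minPower p g hT x < minPower p h hS x)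
    (hhx : minPower p h hS x < minPower p h hT x) :
    ∃ i ∈ S, x ∈ farCell p h i \ farCell p g i := by
  obtain ⟨i, hi, hix⟩ := exists_minPower_eq hS x (p := p) (h := h)
  obtain ⟨j, -, hjx⟩ := exists_minPower_eq hT x (p := p) (h := g)
  refine ⟨i, hi, fun k => ?_, fun hxg => ?_⟩
  · rw [← hix]
    by_cases hk : k ∈ S
    · exact minPower_le hS hk x
    · exact hhx.le.trans (minPower_le hT (Finset.mem_compl.2 hk) x)
  · linarith [hxg j, hgS i hi]

theorem exists_mem_interior_minPower_lt_lt (hΩ : Convex ℝ Ω) (hp : Function.Injective p)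
    {g : Fin n → ℝ} {S : Finset (Fin n)} (hS : S.Nonempty) (hT : Sᶜ.Nonempty)
    (hgS : ∀ k ∈ S, g k = h k) (hgT : ∀ k ∈ Sᶜ, g k < h k)
    (hposg : ∀ i ∈ S, densMeasure Ω f (farCell p g i ∩ Ω) ≠ 0)
    (hposh : ∀ j ∈ Sᶜ, densMeasure Ω f (farCell p h j ∩ Ω) ≠ 0) :
    ∃ x ∈ interior Ω, minPower p g hT x < minPower p h hS x ∧
      minPower p h hS x < minPower p h hT x := by
  obtain ⟨i, hi⟩ := id hS
  obtain ⟨a, ha, hai⟩ := exists_mem_interior_forall_lt_of_farCell hΩ hp (hposg i hi)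
  obtain ⟨j, hj⟩ := id hT
  obtain ⟨b, hb, hbj⟩ := exists_mem_interior_forall_lt_of_farCell hΩ hp (hposh j hj)
  refine hΩ.interior.isPreconnected.exists_lt_lt (continuous_minPower hS).continuousOn
    (continuous_minPower hT).continuousOn (continuous_minPower hT).continuousOn
    (fun x _ => minPower_lt_minPower hT hgT x) ha hb ?_ ?_
  · obtain ⟨k, hk, hka⟩ := exists_minPower_eq hT a (p := p) (h := g)
    rw [← minPower_congr hS hgS, hka]
    exact (minPower_le hS hi a).trans_lt (hai k fun hki => Finset.mem_compl.1 hk (hki ▸ hi))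
  · obtain ⟨k, hk, hkb⟩ := exists_minPower_eq hS b (p := p) (h := h)
    rw [hkb]
    exact (minPower_le hT hj b).trans_lt (hbj k fun hkj => Finset.mem_compl.1 hj (hkj ▸ hk))

theorem eq_of_le_of_measure_farCell_eq (hΩ : Convex ℝ Ω) (hf : ContinuousOn f Ω)
    (hfpos : ∀ x ∈ Ω, 0 < f x) (hp : Function.Injective p) {g : Fin n → ℝ} (hgh : g ≤ h)
    (hgh_eq : ∃ i, g i = h i)
    (hmass : ∀ i, densMeasure Ω f (farCell p g i ∩ Ω) = densMeasure Ω f (farCell p h i ∩ Ω))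
    (hfin : ∀ i, densMeasure Ω f (farCell p h i ∩ Ω) ≠ ⊤)
    (hpos : ∀ i, densMeasure Ω f (farCell p h i ∩ Ω) ≠ 0) : g = h := by
  classical
  by_contra hne
  set S := Finset.univ.filter fun i => g i = h i
  have hS : S.Nonempty := by
    obtain ⟨i, hi⟩ := hgh_eq
    exact ⟨i, by simpa [S] using hi⟩
  have hT : Sᶜ.Nonempty := by
    obtain ⟨i, hi⟩ := Function.ne_iff.1 hne
    exact ⟨i, by simpa [S] using hi⟩
  have hgS : ∀ k ∈ S, g k = h k := by simp [S]
  have hgT : ∀ k ∈ Sᶜ, g k < h k := fun k hk => (hgh k).lt_of_ne (by simpa [S] using hk)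
  obtain ⟨x, hx, hgap⟩ := exists_mem_interior_minPower_lt_lt hΩ hp hS hT hgS hgT
    (fun i _ => hmass i ▸ hpos i) (fun j _ => hpos j)
  set U := {x | minPower p g hT x < minPower p h hS x ∧ minPower p h hS x < minPower p h hT x}
    ∩ interior Ω
  have hUpos : 0 < densMeasure Ω f U := by
    refine densMeasure_pos_of_isOpen (hΩ.nullMeasurableSet volume) hf hfpos ?_ ⟨x, hgap, hx⟩
      fun y hy => interior_subset hy.2
    exact ((isOpen_lt (continuous_minPower hT) (continuous_minPower hS)).inter
      (isOpen_lt (continuous_minPower hS) (continuous_minPower hT))).inter isOpen_interior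
  have hUnull : densMeasure Ω f (⋃ i ∈ S, (farCell p h i ∩ Ω) \ farCell p g i) = 0 :=
    (measure_biUnion_null_iff S.countable_toSet).2 fun i hi =>
      measure_farCell_diff_eq_zero hΩ (fun j => by linarith [hgS i hi, hgh j]) (hmass i) (hfin i)
  refine hUpos.ne' (measure_mono_null ?_ hUnull)
  rintro y ⟨hy, hyΩ⟩
  obtain ⟨i, hi, hyh, hyg⟩ := exists_mem_farCell_diff_of_minPower_lt hS hT hgS hy.1 hy.2
  exact Set.mem_biUnion hi ⟨⟨hyh, interior_subset hyΩ⟩, hyg⟩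

end farCell

theorem stmt_19_general {d n : ℕ}
    (Ω : Set (EuclideanSpace ℝ (Fin d)))
    (hΩconv : Convex ℝ Ω)
    (f : EuclideanSpace ℝ (Fin d) → ℝ)
    (hf : ContinuousOn f Ω) (hfpos : ∀ x ∈ Ω, 0 < f x)
    (p : Fin n → EuclideanSpace ℝ (Fin d)) (hp : Function.Injective p)
    (ν : Fin n → ℝ) (hν : ∀ i, 0 < ν i)
    (h h' : Fin n → ℝ)
    (hh : ∀ i, densMeasure Ω f (farCell p h i ∩ Ω) = ENNReal.ofReal (ν i))
    (hh' : ∀ i, densMeasure Ω f (farCell p h' i ∩ Ω) = ENNReal.ofReal (ν i)) :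
    ∃ c : ℝ, ∀ i, h' i = h i + c := by
  rcases isEmpty_or_nonempty (Fin n) with _ | _
  · exact ⟨0, isEmptyElim⟩
  obtain ⟨i₀, -, hi₀⟩ := Finset.exists_max_image Finset.univ (fun i => h' i - h i)
    Finset.univ_nonempty
  set c := h' i₀ - h i₀
  have hshift : (fun i => h' i - c) = h :=
    eq_of_le_of_measure_farCell_eq hΩconv hf hfpos hp
      (fun i => by linarith [hi₀ i (Finset.mem_univ i)]) ⟨i₀, by ring⟩
      (fun i => by rw [farCell_sub_const, hh, hh'])
      (fun i => hh i ▸ ENNReal.ofReal_ne_top)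
      (fun i => hh i ▸ (ENNReal.ofReal_pos.2 (hν i)).ne')
  exact ⟨c, fun i => by linarith [congrFun hshift i]⟩

theorem stmt_19 {d n : ℕ}
    (Ω : Set (EuclideanSpace ℝ (Fin d)))
    (hΩc : IsCompact Ω) (hΩconv : Convex ℝ Ω) (hΩint : (interior Ω).Nonempty)
    (f : EuclideanSpace ℝ (Fin d) → ℝ)
    (hf : ContinuousOn f Ω) (hfpos : ∀ x ∈ Ω, 0 < f x)
    (p : Fin n → EuclideanSpace ℝ (Fin d)) (hp : Function.Injective p)
    (ν : Fin n → ℝ) (hν : ∀ i, 0 < ν i)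
    (hmass : ∑ i, ν i = (densMeasure Ω f Ω).toReal)
    (h h' : Fin n → ℝ)
    (hh : ∀ i, densMeasure Ω f (farCell p h i ∩ Ω) = ENNReal.ofReal (ν i))
    (hh' : ∀ i, densMeasure Ω f (farCell p h' i ∩ Ω) = ENNReal.ofReal (ν i)) :
    ∃ c : ℝ, ∀ i, h' i = h i + c :=
  stmt_19_general Ω hΩconv f hf hfpos p hp ν hν h h' hh hh'
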